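/- Let C ∉ S₀ and B be metabolites. If every χ-path S₀ →_{Θ₁,Ŝ₁,X₁} S₁ → ⋯ →_{Θ_m,Ŝ_m,X_m} S_m from S₀ in Gr((R,S₀)) leading to C satisfies (i) B ∈ S_{m−1} and (ii) B ∈ S₀ implies B ∈ Ŝ₁ ∪ ⋯ ∪ Ŝ_m, then B is necessary for the production of C, i.e. B ∈ ℳ(E) for every explanation E for C with respect to S₀ and R. -/

import Mathlib

/-- A biochemical rule: either binary `A₁ ∘ A₂ → C` or unary `A → C`. -/
inductive Rule (M : Type) where
  | binary (a₁ a₂ c : M) : Rule M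
  | unary (a c : M) : Rule M
  deriving DecidableEq

namespace Rule

/-- The conclusion (produced metabolite) of a rule. -/
def concl {M : Type} : Rule M → M
  | .binary _ _ c => c
  | .unary _ c => c

/-- The premises of a rule, as a finite set. -/
def premises {M : Type} [DecidableEq M] : Rule M → Finset M
  | .binary a₁ a₂ _ => {a₁, a₂}
  | .unary a _ => {a}

/-- The premises of a rule, as a set. -/
def premSet {M : Type} : Rule M → Set M
  | .binary a₁ a₂ _ => {a₁, a₂}
  | .unary a _ => {a}

end Rule

/-- Explanation trees: leaves `C[]`, unary nodes `C_r[E]`, binary nodes `C_r[E₁,E₂]`. -/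
inductive Expl (M : Type) where
  | leaf (c : M) : Expl M
  | node1 (r : Rule M) (e : Expl M) : Expl M
  | node2 (r : Rule M) (e₁ e₂ : Expl M) : Expl M

namespace Expl

/-- The root metabolite of an explanation. -/
def root {M : Type} : Expl M → M
  | .leaf c => c
  | .node1 r _ => r.concl
  | .node2 r _ _ => r.concl

/-- `ℛ(E)`: the set of rules used by an explanation. -/
def rules {M : Type} : Expl M → Set (Rule M)
  | .leaf _ => ∅
  | .node1 r e => {r} ∪ e.rules
  | .node2 r e₁ e₂ => {r} ∪ e₁.rules ∪ e₂.rules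

/-- `ℳ(E)`: the set of metabolites required by an explanation. -/
def mets {M : Type} : Expl M → Set M
  | .leaf c => {c}
  | .node1 r e => r.premSet ∪ e.mets
  | .node2 r e₁ e₂ => r.premSet ∪ e₁.mets ∪ e₂.mets

/-- Subexplanation (subtree) relation. -/
inductive Sub {M : Type} : Expl M → Expl M → Prop where
  | refl (e : Expl M) : Sub e e
  | node1 {e e' : Expl M} {r : Rule M} : Sub e e' → Sub e (.node1 r e')
  | left {e e₁ e₂ : Expl M} {r : Rule M} : Sub e e₁ → Sub e (.node2 r e₁ e₂)
  | right {e e₁ e₂ : Expl M} {r : Rule M} : Sub e e₂ → Sub e (.node2 r e₁ e₂)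

/-- An explanation is uniform if any two subexplanations with the same root metabolite coincide. -/
def Uniform {M : Type} (E : Expl M) : Prop :=
  ∀ e₁ e₂ : Expl M, Sub e₁ E → Sub e₂ E → root e₁ = root e₂ → e₁ = e₂

end Expl

/-- `IsExpl S R C E`: `E` is an explanation for `C` w.r.t. initial solution `S` and m-network `R`. -/
inductive IsExpl {M : Type} (S : Finset M) (R : Finset (Rule M)) : M → Expl M → Prop where
  | leaf {c : M} : c ∈ S → IsExpl S R c (.leaf c)
  | node1 {a c : M} {e : Expl M} : Rule.unary a c ∈ R → IsExpl S R a e →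
      IsExpl S R c (.node1 (Rule.unary a c) e)
  | node2 {a₁ a₂ c : M} {e₁ e₂ : Expl M} : Rule.binary a₁ a₂ c ∈ R →
      IsExpl S R a₁ e₁ → IsExpl S R a₂ e₂ →
      IsExpl S R c (.node2 (Rule.binary a₁ a₂ c) e₁ e₂)

/-- A rule `r ∈ R` is essential in `S` for `C`. -/
def Essential {M : Type} [DecidableEq M] (S : Finset M) (R : Finset (Rule M))
    (r : Rule M) (C : M) : Prop :=
  (∃ E : Expl M, IsExpl S R C E) ∧ ¬ ∃ E : Expl M, IsExpl S (R.erase r) C E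

/-- Rules `r₁, r₂ ∈ R` are mutually essential in `S` for `C`. -/
def MutuallyEssential {M : Type} [DecidableEq M] (S : Finset M) (R : Finset (Rule M))
    (r₁ r₂ : Rule M) (C : M) : Prop :=
  (∃ E : Expl M, IsExpl S (R.erase r₁) C E) ∧
  (∃ E : Expl M, IsExpl S (R.erase r₂) C E) ∧
  ¬ ∃ E : Expl M, IsExpl S ((R.erase r₁).erase r₂) C E

section Paths

variable {M : Type} [DecidableEq M]

/-- A path in `Gr((R,S₀))`, represented by its list of transition rules from a starting state. -/
inductive IsPath (R : Finset (Rule M)) : Finset M → List (Rule M) → Prop where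
  | nil (S : Finset M) : IsPath R S []
  | cons {S : Finset M} {r : Rule M} {rs : List (Rule M)} :
      r ∈ R → r.premises ⊆ S → IsPath R (insert r.concl S) rs → IsPath R S (r :: rs)

/-- A χ-path: a path with no self-loop transitions (each step produces a genuinely new state). -/
inductive IsChiPath (R : Finset (Rule M)) : Finset M → List (Rule M) → Prop where
  | nil (S : Finset M) : IsChiPath R S []
  | cons {S : Finset M} {r : Rule M} {rs : List (Rule M)} :
      r ∈ R → r.premises ⊆ S → r.concl ∉ S →
      IsChiPath R (insert r.concl S) rs → IsChiPath R S (r :: rs)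

/-- `LeadsTo C S rs`: the path `rs` from `S` leads to `C`, i.e. its last produced metabolite
is `C` and its final state is the first state containing `C`. -/
def LeadsTo (C : M) : Finset M → List (Rule M) → Prop
  | _, [] => False
  | S, [r] => C ∉ S ∧ r.concl = C
  | S, r :: rs => C ∉ S ∧ LeadsTo C (insert r.concl S) rs

/-- The final state of a path. -/
def run (S : Finset M) : List (Rule M) → Finset M
  | [] => S
  | r :: rs => run (insert r.concl S) rs

/-- Auxiliary predicate for ρ-paths: `Xs` accumulates the previously produced metabolites,
`Us` the union of the previous `Ŝᵢ = premises Θᵢ ∩ S₀`, `S` is the current state. -/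
def IsRhoAux (R : Finset (Rule M)) (S₀ : Finset M) :
    Finset M → Finset M → Finset M → List (Rule M) → Prop
  | _, _, _, [] => True
  | Xs, Us, S, r :: rs =>
      r ∈ R ∧ r.premises ⊆ S ∧
      (r.concl ∈ S → r.concl ∈ S₀ ∧ r.concl ∉ Xs ∧ r.concl ∉ Us) ∧
      IsRhoAux R S₀ (insert r.concl Xs) (Us ∪ (r.premises ∩ S₀)) (insert r.concl S) rs

/-- A ρ-path from `S₀` in `Gr((R,S₀))`. -/
def IsRhoPath (R : Finset (Rule M)) (S₀ : Finset M) (rs : List (Rule M)) : Prop :=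
  IsRhoAux R S₀ ∅ ∅ S₀ rs

/-- `Ŝ₁ ∪ ⋯ ∪ Ŝ_m`: the union of the parts of `S₀` used by the transitions of the path. -/
def hatUnion (S₀ : Finset M) (rs : List (Rule M)) : Finset M :=
  rs.foldr (fun r acc => (r.premises ∩ S₀) ∪ acc) ∅

/-- `𝒰(p) = (Ŝ₁ ∪ ⋯ ∪ Ŝ_m) \ {X₁,…,X_m}`. -/
def usedMet (S₀ : Finset M) (rs : List (Rule M)) : Finset M :=
  hatUnion S₀ rs \ (rs.map Rule.concl).toFinset

end Paths

/-!
Unfold an explanation `E` for `C` bottom-up into a path of `Gr((R,S₀))` that uses only rules of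
`E`, drop its self-loops and cut it at the first production of `C`: this is a χ-path leading
to `C`. By (i), `B` lies in `S₀` or is produced by one of its first `m - 1` rules. In the first
case (ii) makes `B` a premise of a rule of `E`; in the second the rule's conclusion differs
from `C` and hence, in the tree `E`, is a premise of its parent rule. Either way `B ∈ ℳ(E)`.
-/

namespace Rule

variable {M : Type} [DecidableEq M]

@[simp]
lemma coe_premises (r : Rule M) : (r.premises : Set M) = r.premSet := by
  cases r <;> simp [premises, premSet]

end Rule

namespace IsExpl

variable {M : Type} {S₀ : Finset M} {R : Finset (Rule M)} {c : M} {E : Expl M}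

lemma premSet_subset_mets (hE : IsExpl S₀ R c E) {r : Rule M} (hr : r ∈ E.rules) :
    r.premSet ⊆ E.mets := by
  induction hE with
  | leaf _ => simp [Expl.rules] at hr
  | node1 _ _ ih =>
    simp only [Expl.rules, Expl.mets, Set.mem_union, Set.mem_singleton_iff] at hr ⊢
    rcases hr with rfl | hr
    · exact Set.subset_union_left
    · exact (ih hr).trans Set.subset_union_right
  | node2 _ _ _ ih₁ ih₂ =>
    simp only [Expl.rules, Expl.mets, Set.mem_union, Set.mem_singleton_iff] at hr ⊢
    rcases hr with (rfl | hr) | hr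
    · exact Set.subset_union_left.trans Set.subset_union_left
    · exact (ih₁ hr).trans (Set.subset_union_right.trans Set.subset_union_left)
    · exact (ih₂ hr).trans Set.subset_union_right

lemma concl_mem_mets (hE : IsExpl S₀ R c E) {r : Rule M} (hr : r ∈ E.rules)
    (hrc : r.concl ≠ c) : r.concl ∈ E.mets := by
  induction hE with
  | leaf _ => simp [Expl.rules] at hr
  | @node1 a c e _ _ ih =>
    simp only [Expl.rules, Set.mem_union, Set.mem_singleton_iff] at hr
    rcases hr with rfl | hr
    · exact absurd rfl hrc
    · by_cases hra : r.concl = a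
      · exact Or.inl (by simp [hra, Rule.premSet])
      · exact Or.inr (ih hr hra)
  | @node2 a₁ a₂ c e₁ e₂ _ _ _ ih₁ ih₂ =>
    simp only [Expl.rules, Set.mem_union, Set.mem_singleton_iff] at hr
    rcases hr with (rfl | hr) | hr
    · exact absurd rfl hrc
    · by_cases hra : r.concl = a₁
      · exact Or.inl (Or.inl (by simp [hra, Rule.premSet]))
      · exact Or.inl (Or.inr (ih₁ hr hra))
    · by_cases hra : r.concl = a₂
      · exact Or.inl (Or.inl (by simp [hra, Rule.premSet]))
      · exact Or.inr (ih₂ hr hra)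

end IsExpl

section Paths

variable {M : Type} [DecidableEq M] {R : Finset (Rule M)}

lemma run_eq_union (S : Finset M) (rs : List (Rule M)) :
    run S rs = S ∪ (rs.map Rule.concl).toFinset := by
  induction rs generalizing S with
  | nil => simp [run]
  | cons r rs ih =>
    rw [run, ih]
    ext x
    simp [or_left_comm]

lemma run_append (S : Finset M) (rs₁ rs₂ : List (Rule M)) :
    run S (rs₁ ++ rs₂) = run (run S rs₁) rs₂ := by
  induction rs₁ generalizing S with
  | nil => rfl
  | cons r rs ih => exact ih _

lemma subset_run (S : Finset M) (rs : List (Rule M)) : S ⊆ run S rs := by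
  rw [run_eq_union]
  exact Finset.subset_union_left

lemma mem_hatUnion {S₀ : Finset M} {rs : List (Rule M)} {x : M} :
    x ∈ hatUnion S₀ rs ↔ ∃ r ∈ rs, x ∈ r.premises ∧ x ∈ S₀ := by
  induction rs with
  | nil => simp [hatUnion]
  | cons r rs ih =>
    simp only [hatUnion, List.foldr_cons] at ih ⊢
    simp [ih]

lemma IsPath.append {S : Finset M} {rs₁ rs₂ : List (Rule M)} (h₁ : IsPath R S rs₁)
    (h₂ : IsPath R (run S rs₁) rs₂) : IsPath R S (rs₁ ++ rs₂) := by
  induction h₁ with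
  | nil => exact h₂
  | cons hr hp _ ih => exact IsPath.cons hr hp (ih h₂)

/-- The post-order traversal of an explanation is a path realising its root. -/
lemma IsExpl.exists_isPath {S₀ : Finset M} {c : M} {E : Expl M} (hE : IsExpl S₀ R c E)
    {S : Finset M} (hS : S₀ ⊆ S) :
    ∃ rs : List (Rule M), IsPath R S rs ∧ (∀ r ∈ rs, r ∈ E.rules) ∧ c ∈ run S rs := by
  induction hE generalizing S with
  | leaf hc => exact ⟨[], IsPath.nil S, by simp, hS hc⟩
  | @node1 a c e hR _ ih =>
    obtain ⟨rs, hpath, hrules, ha⟩ := ih hS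
    refine ⟨rs ++ [.unary a c], hpath.append ?_, ?_, by simp [run_append, run, Rule.concl]⟩
    · exact IsPath.cons hR (by simpa [Rule.premises] using ha) (IsPath.nil _)
    · simp only [List.mem_append, List.mem_singleton]
      rintro r (hr | rfl)
      · exact Or.inr (hrules r hr)
      · exact Or.inl rfl
  | @node2 a₁ a₂ c e₁ e₂ hR _ _ ih₁ ih₂ =>
    obtain ⟨rs₁, hpath₁, hrules₁, ha₁⟩ := ih₁ hS
    obtain ⟨rs₂, hpath₂, hrules₂, ha₂⟩ := ih₂ (hS.trans (subset_run S rs₁))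
    have ha₁' : a₁ ∈ run S (rs₁ ++ rs₂) := by
      rw [run_append]
      exact subset_run _ _ ha₁
    have ha₂' : a₂ ∈ run S (rs₁ ++ rs₂) := by rwa [run_append]
    refine ⟨rs₁ ++ rs₂ ++ [.binary a₁ a₂ c], (hpath₁.append hpath₂).append ?_, ?_,
      by simp [run_append, run, Rule.concl]⟩
    · refine IsPath.cons hR ?_ (IsPath.nil _)
      simp [Rule.premises, Finset.insert_subset_iff, ha₁', ha₂']
    · simp only [List.mem_append, List.mem_singleton]
      rintro r ((hr | hr) | rfl)
      · exact Or.inl (Or.inr (hrules₁ r hr))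
      · exact Or.inr (hrules₂ r hr)
      · exact Or.inl (Or.inl rfl)

lemma IsPath.exists_isChiPath_leadsTo {S : Finset M} {rs : List (Rule M)} {C : M}
    (hpath : IsPath R S rs) (hCS : C ∉ S) (hC : C ∈ run S rs) :
    ∃ rs' : List (Rule M), IsChiPath R S rs' ∧ LeadsTo C S rs' ∧ rs' ⊆ rs := by
  induction hpath with
  | nil S => exact absurd hC hCS
  | @cons S r rs hR hprem _ ih =>
    by_cases hloop : r.concl ∈ S
    · rw [run, Finset.insert_eq_of_mem hloop] at hC
      rw [Finset.insert_eq_of_mem hloop] at ih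
      obtain ⟨rs', hchi, hlead, hsub⟩ := ih hCS hC
      exact ⟨rs', hchi, hlead, List.Subset.trans hsub (List.subset_cons_self r rs)⟩
    by_cases hrC : r.concl = C
    · exact ⟨[r], .cons hR hprem hloop (.nil _), ⟨hCS, hrC⟩, by simp⟩
    have hCS' : C ∉ insert r.concl S := by simp [hCS, Ne.symm hrC]
    obtain ⟨rs', hchi, hlead, hsub⟩ := ih hCS' hC
    refine ⟨r :: rs', .cons hR hprem hloop hchi, ?_, List.cons_subset_cons r hsub⟩
    cases rs' with
    | nil => exact hlead.elim
    | cons _ _ => exact ⟨hCS, hlead⟩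

lemma LeadsTo.not_mem_run_dropLast {C : M} :
    ∀ {S : Finset M} {rs : List (Rule M)}, LeadsTo C S rs → C ∉ run S rs.dropLast
  | _, [], h => h.elim
  | _, [_], h => h.1
  | S, r :: r' :: rs, h => by
    rw [List.dropLast_cons_cons, run]
    exact LeadsTo.not_mem_run_dropLast (S := insert r.concl S) (rs := r' :: rs) h.2

end Paths

/-- Checkpoint: if every χ-path from `S₀` leading to `C` satisfies
(i) `B` belongs to the next-to-last state and (ii) `B ∈ S₀` implies `B ∈ Ŝ₁ ∪ ⋯ ∪ Ŝ_m`,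
then `B` is necessary for the production of `C`. -/
theorem stmt10 {M : Type} [DecidableEq M] (R : Finset (Rule M)) (S₀ : Finset M)
    (B C : M) (hC : C ∉ S₀)
    (h : ∀ rs : List (Rule M), IsChiPath R S₀ rs → LeadsTo C S₀ rs →
      B ∈ run S₀ rs.dropLast ∧ (B ∈ S₀ → B ∈ hatUnion S₀ rs)) :
    ∀ E : Expl M, IsExpl S₀ R C E → B ∈ E.mets := by
  intro E hE
  obtain ⟨rs₀, hpath, hrules₀, hCrun⟩ := hE.exists_isPath subset_rfl
  obtain ⟨rs, hchi, hlead, hsub⟩ := hpath.exists_isChiPath_leadsTo hC hCrun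
  have hrules : ∀ r ∈ rs, r ∈ E.rules := fun r hr => hrules₀ r (hsub hr)
  obtain ⟨hBrun, hBhat⟩ := h rs hchi hlead
  have hCrun' := hlead.not_mem_run_dropLast
  rw [run_eq_union, Finset.mem_union] at hBrun hCrun'
  rcases hBrun with hB₀ | hBX
  · obtain ⟨r, hr, hBr, -⟩ := mem_hatUnion.1 (hBhat hB₀)
    exact hE.premSet_subset_mets (hrules r hr) (by simpa [← Rule.coe_premises] using hBr)
  · obtain ⟨r, hr, rfl⟩ := List.mem_map.1 (List.mem_toFinset.1 hBX)
    refine hE.concl_mem_mets (hrules r (List.dropLast_subset rs hr)) ?_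
    intro hrC
    exact hCrun' (Or.inr (List.mem_toFinset.2 (List.mem_map.2 ⟨r, hr, hrC⟩)))
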